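/- arXiv:2306.10842 — 6 statements merged into one kernel-verified Lean document; each statement's English description precedes it below -/
import Mathlib

section
/- Let K be a connected fractal square of order n with digit set D. Then the self-similar boundary of K is the union of the face intersections over adjacency directions: ∂K = ⋃_{α ∈ A_D} F_α, where F_α = K ∩ (K + α) and A_D = {α ∈ {−1,0,1}² \ {(0,0)} : D ∩ (D + α) ≠ ∅}. -/
open Set Pointwise

noncomputable section

/-- The canonical embedding of `ℤ × ℤ` into `ℝ × ℝ`. -/
def coeZ2 (d : ℤ × ℤ) : ℝ × ℝ := ((d.1 : ℝ), (d.2 : ℝ))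

/-- The contraction similarity `x ↦ (x + d) / n` of the plane. -/
def pieceMap (n : ℕ) (d : ℤ × ℤ) (x : ℝ × ℝ) : ℝ × ℝ := (n : ℝ)⁻¹ • (x + coeZ2 d)

/-- `K` is a fractal square of order `n` with digit set `D ⊆ {0,…,n-1}²`,
`1 < |D| < n²`: a nonempty compact set with `K = (K + D)/n`. -/
def IsFractalSquare (n : ℕ) (D : Set (ℤ × ℤ)) (K : Set (ℝ × ℝ)) : Prop :=
  2 ≤ n ∧ D ⊆ Set.Icc (0, 0) ((n : ℤ) - 1, (n : ℤ) - 1) ∧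
  1 < Nat.card D ∧ Nat.card D < n ^ 2 ∧
  K.Nonempty ∧ IsCompact K ∧
  K = ⋃ d ∈ D, pieceMap n d '' K

/-- A dendrite: a nonempty compact, connected, locally connected (planar) set
containing no subset homeomorphic to the circle. -/
def IsDendrite (K : Set (ℝ × ℝ)) : Prop :=
  K.Nonempty ∧ IsCompact K ∧ IsConnected K ∧ LocallyConnectedSpace K ∧
  ¬ ∃ S : Set (ℝ × ℝ), S ⊆ K ∧ Nonempty (S ≃ₜ Circle)

/-- `Dpow n D k` is the digit set `D^k = n^{k-1}·D + ⋯ + n·D + D` (with `D^0 = {0}`). -/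
def Dpow (n : ℕ) (D : Set (ℤ × ℤ)) : ℕ → Set (ℤ × ℤ)
  | 0 => {(0, 0)}
  | k + 1 => Set.image2 (fun a b => (n : ℤ) • a + b) (Dpow n D k) D

/-- The critical set: union of pairwise intersections of first-order pieces. -/
def criticalSet (n : ℕ) (D : Set (ℤ × ℤ)) (K : Set (ℝ × ℝ)) : Set (ℝ × ℝ) :=
  ⋃ d ∈ D, ⋃ d' ∈ D, ⋃ (_ : d ≠ d'), (pieceMap n d '' K) ∩ (pieceMap n d' '' K)

/-- The self-similar boundary `∂K = {x ∈ K : ∃ k ≥ 1, ∃ d ∈ D^k, (x + d)/n^k ∈ C}`. -/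
def ssBoundary (n : ℕ) (D : Set (ℤ × ℤ)) (K : Set (ℝ × ℝ)) : Set (ℝ × ℝ) :=
  {x ∈ K | ∃ k ≥ 1, ∃ d ∈ Dpow n D k, ((n : ℝ) ^ k)⁻¹ • (x + coeZ2 d) ∈ criticalSet n D K}

/-- `F_α = K ∩ (K + α)`. -/
def Fset (K : Set (ℝ × ℝ)) (α : ℤ × ℤ) : Set (ℝ × ℝ) := K ∩ ((· + coeZ2 α) '' K)

/-- `A_D = {α ∈ {-1,0,1}² \ {(0,0)} : D ∩ (D + α) ≠ ∅}`. -/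
def adjDirs (D : Set (ℤ × ℤ)) : Set (ℤ × ℤ) :=
  {α | α ∈ ({-1, 0, 1} ×ˢ {-1, 0, 1} : Set (ℤ × ℤ)) ∧ α ≠ (0, 0) ∧
    (D ∩ ((· + α) '' D)).Nonempty}

/-!
A point of `∂K` lies, at some level, in two distinct pieces of `K`. Undoing one similarity
at a time, it suffices to show: if `(x + b)/n ∈ F_α` with `α ∈ A_D`, then `x ∈ F_β` for
some `β ∈ A_D`. Writing `(x + b)/n - α = (y + c)/n` with `y ∈ K` gives
`x - y = nα + c - b =: β`, and `β ∈ {-1,0,1}²` because `K ⊆ [0,1]²`. Either `β = α`, or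
`β` is diagonal and the pieces containing `x` and `x - β` have digits in opposite corners of
`{0,…,n-1}²`. Since `K` is connected, so is the contact graph of its first-level pieces, and
a king-move path in `D` from one corner to the opposite one must contain two digits
differing by `β` (a discrete crossing argument), so `β ∈ A_D`.
-/

@[simp] lemma coeZ2_fst (d : ℤ × ℤ) : (coeZ2 d).1 = d.1 := rfl

@[simp] lemma coeZ2_snd (d : ℤ × ℤ) : (coeZ2 d).2 = d.2 := rfl

lemma coeZ2_add (a b : ℤ × ℤ) : coeZ2 (a + b) = coeZ2 a + coeZ2 b := by
  ext <;> simp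

lemma coeZ2_sub (a b : ℤ × ℤ) : coeZ2 (a - b) = coeZ2 a - coeZ2 b := by
  ext <;> simp

lemma coeZ2_zsmul (m : ℤ) (a : ℤ × ℤ) : coeZ2 (m • a) = (m : ℝ) • coeZ2 a := by
  ext <;> simp

lemma continuous_pieceMap (n : ℕ) (d : ℤ × ℤ) : Continuous (pieceMap n d) := by
  unfold pieceMap
  fun_prop

lemma smul_pieceMap {n : ℕ} (hn : (n : ℝ) ≠ 0) (d : ℤ × ℤ) (x : ℝ × ℝ) :
    (n : ℝ) • pieceMap n d x = x + coeZ2 d :=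
  smul_inv_smul₀ hn _

lemma pieceMap_add_sub (n : ℕ) (d α : ℤ × ℤ) (x : ℝ × ℝ) :
    pieceMap n (d + α) (x - coeZ2 α) = pieceMap n d x := by
  rw [pieceMap, pieceMap, coeZ2_add, sub_add_add_cancel]

lemma mem_image_pieceMap {n : ℕ} (hn : (n : ℝ) ≠ 0) {d : ℤ × ℤ} {K : Set (ℝ × ℝ)}
    {z : ℝ × ℝ} : z ∈ pieceMap n d '' K ↔ (n : ℝ) • z - coeZ2 d ∈ K := by
  constructor
  · rintro ⟨y, hy, rfl⟩
    rwa [smul_pieceMap hn, add_sub_cancel_right]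
  · intro h
    exact ⟨_, h, by rw [pieceMap, sub_add_cancel, inv_smul_smul₀ hn]⟩

lemma inv_pow_succ_smul_add_coeZ2 {n : ℕ} (hn : (n : ℝ) ≠ 0) (k : ℕ) (a b : ℤ × ℤ)
    (x : ℝ × ℝ) :
    ((n : ℝ) ^ (k + 1))⁻¹ • (x + coeZ2 ((n : ℤ) • a + b)) =
      ((n : ℝ) ^ k)⁻¹ • (pieceMap n b x + coeZ2 a) := by
  ext <;> simp [pieceMap] <;> field_simp <;> ring

lemma mem_Fset_iff {K : Set (ℝ × ℝ)} {α : ℤ × ℤ} {x : ℝ × ℝ} :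
    x ∈ Fset K α ↔ x ∈ K ∧ x - coeZ2 α ∈ K := by
  simp [Fset, sub_eq_add_neg]

lemma mem_criticalSet_iff {n : ℕ} {D : Set (ℤ × ℤ)} {K : Set (ℝ × ℝ)} {z : ℝ × ℝ} :
    z ∈ criticalSet n D K ↔
      ∃ d ∈ D, ∃ d' ∈ D, d ≠ d' ∧ z ∈ pieceMap n d '' K ∧ z ∈ pieceMap n d' '' K := by
  simp only [criticalSet, mem_iUnion, mem_inter_iff, exists_prop]

lemma mem_adjDirs_iff {D : Set (ℤ × ℤ)} {α : ℤ × ℤ} :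
    α ∈ adjDirs D ↔ (|α.1| ≤ 1 ∧ |α.2| ≤ 1) ∧ α ≠ (0, 0) ∧ ∃ q ∈ D, q + α ∈ D := by
  simp only [adjDirs, mem_ofPred_eq, mem_prod, mem_insert_iff, mem_singleton_iff, abs_le]
  refine and_congr (by omega) (and_congr_right fun _ => ⟨?_, ?_⟩)
  · rintro ⟨_, hp, q, hq, rfl⟩
    exact ⟨q, hq, hp⟩
  · rintro ⟨q, hq, hqα⟩
    exact ⟨_, hqα, q, hq, rfl⟩

lemma Dpow_one (n : ℕ) (D : Set (ℤ × ℤ)) : Dpow n D 1 = D := by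
  simp [Dpow, Prod.mk_zero_zero]

theorem subset_Icc_of_forall_mul_eq_add {S : Set ℝ} (hS : IsCompact S) {c : ℝ} (hc : 1 < c)
    (h : ∀ s ∈ S, ∃ t ∈ S, ∃ e ∈ Icc 0 (c - 1), c * s = t + e) : S ⊆ Icc 0 1 := by
  intro s hs
  obtain ⟨M, hM, hMmax⟩ := hS.exists_isGreatest ⟨s, hs⟩
  obtain ⟨m, hm, hmmin⟩ := hS.exists_isLeast ⟨s, hs⟩
  obtain ⟨t, ht, e, ⟨he₀, he₁⟩, hMt⟩ := h M hM
  obtain ⟨t', ht', e', ⟨he₀', -⟩, hmt⟩ := h m hm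
  have hM1 : M ≤ 1 := by nlinarith [hMmax ht]
  have hm0 : 0 ≤ m := by nlinarith [hmmin ht']
  exact ⟨hm0.trans (hmmin hs), (hMmax hs).trans hM1⟩

theorem exists_eq_of_apply_succ_le_add_one {g : ℕ → ℤ} (hg : ∀ t, g (t + 1) ≤ g t + 1)
    {a b : ℕ} (hab : a ≤ b) {v : ℤ} (ha : g a ≤ v) (hb : v ≤ g b) :
    ∃ t, a ≤ t ∧ t ≤ b ∧ g t = v := by
  induction b, hab using Nat.le_induction with
  | base => exact ⟨a, le_rfl, le_rfl, le_antisymm ha hb⟩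
  | succ b hab ih =>
    by_cases hvb : v ≤ g b
    · obtain ⟨t, hat, htb, hgt⟩ := ih hvb
      exact ⟨t, hat, htb.trans b.le_succ, hgt⟩
    · exact ⟨b + 1, hab.trans b.le_succ, le_rfl, by linarith [hg b]⟩

theorem Relation.ReflTransGen.exists_seq {α : Type*} {r : α → α → Prop} {a b : α}
    (h : ReflTransGen r a b) :
    ∃ (f : ℕ → α) (L : ℕ), f 0 = a ∧ f L = b ∧ ∀ t, ReflGen r (f t) (f (t + 1)) := by
  induction h using ReflTransGen.head_induction_on with
  | refl => exact ⟨fun _ => b, 0, rfl, rfl, fun _ => ReflGen.refl⟩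
  | @head a c hac _ ih =>
    obtain ⟨f, L, hf0, hfL, hf⟩ := ih
    refine ⟨fun t => Nat.casesOn t a f, L + 1, rfl, hfL, ?_⟩
    rintro (_ | t)
    · exact ReflGen.single (show r a (f 0) from hf0 ▸ hac)
    · exact hf t

theorem Set.Finite.reflTransGen_of_isPreconnected_biUnion {ι X : Type*} [TopologicalSpace X]
    {T : Set ι} (hT : T.Finite) {F : ι → Set X} (hF : ∀ i ∈ T, IsClosed (F i))
    (hne : ∀ i ∈ T, (F i).Nonempty) (hconn : IsPreconnected (⋃ i ∈ T, F i)) {i j : ι}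
    (hi : i ∈ T) (hj : j ∈ T) :
    Relation.ReflTransGen (fun a b => a ∈ T ∧ b ∈ T ∧ (F a ∩ F b).Nonempty) i j := by
  by_contra hij
  set S := {b ∈ T | Relation.ReflTransGen (fun a b => a ∈ T ∧ b ∈ T ∧ (F a ∩ F b).Nonempty) i b}
  have hclosed : ∀ U ⊆ T, IsClosed (⋃ b ∈ U, F b) := fun U hU =>
    (hT.subset hU).isClosed_biUnion fun b hb => hF b (hU hb)
  obtain ⟨z, -, hzS, hzT⟩ := isPreconnected_closed_iff.1 hconn (⋃ b ∈ S, F b)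
    (⋃ c ∈ T \ S, F c) (hclosed _ (sep_subset _ _)) (hclosed _ sdiff_subset)
    (by rw [← biUnion_union, union_sdiff_cancel (sep_subset _ _)])
    (by
      obtain ⟨z, hz⟩ := hne i hi
      exact ⟨z, mem_biUnion hi hz, mem_biUnion ⟨hi, .refl⟩ hz⟩)
    (by
      obtain ⟨z, hz⟩ := hne j hj
      exact ⟨z, mem_biUnion hj hz, mem_biUnion ⟨hj, fun h => hij h.2⟩ hz⟩)
  rw [mem_iUnion₂] at hzS hzT
  obtain ⟨b, hb, hzb⟩ := hzS
  obtain ⟨c, hc, hzc⟩ := hzT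
  exact hc.2 ⟨hc.1, hb.2.tail ⟨hb.1, hc.1, z, hzb, hzc⟩⟩

def IsKingPath (f : ℕ → ℤ × ℤ) : Prop :=
  ∀ t, |(f (t + 1)).1 - (f t).1| ≤ 1 ∧ |(f (t + 1)).2 - (f t).2| ≤ 1

theorem not_lt_and_lt_of_chain_step {f : ℕ → ℤ × ℤ}
    (hstep : IsKingPath f)
    (hgap : ∀ a b, ¬((f b).1 = (f a).1 + 1 ∧ (f b).2 = (f a).2 + 1)) {s m : ℕ} (hsm : s ≤ m)
    (IH : ∀ a b, a ≤ b → b ≤ m → ¬((f a).1 < (f b).1 ∧ (f a).2 < (f b).2))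
    (h₁ : (f s).1 < (f (m + 1)).1) (h₂ : (f s).2 < (f (m + 1)).2) (hm : (f m).1 = (f s).1) :
    False := by
  have hlast := hstep m
  simp only [abs_le] at hlast
  have hq₁ : (f (m + 1)).1 = (f s).1 + 1 := by omega
  have hq₂ : (f s).2 + 2 ≤ (f (m + 1)).2 := by have := hgap s (m + 1); omega
  -- a point `f w` between `s` and `m` on the row just below `f (m + 1)`; it is forced to be
  -- `f (m + 1) - (1, 1)`
  obtain ⟨w, hsw, hwm, hw⟩ := exists_eq_of_apply_succ_le_add_one (g := fun t => (f t).2)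
    (fun t => by have := hstep t; simp only [abs_le] at this; omega) hsm
    (v := (f (m + 1)).2 - 1) (by omega) (by omega)
  have hws : (f w).1 ≤ (f s).1 := by have := IH s w hsw hwm; omega
  have hwm₂ : (f w).2 < (f m).2 := by have := hgap m (m + 1); omega
  have hsw₁ : (f s).1 ≤ (f w).1 := by have := IH w m hwm le_rfl; omega
  exact hgap w (m + 1) ⟨by omega, by omega⟩

theorem not_lt_and_lt_of_chain {f : ℕ → ℤ × ℤ}
    (hstep : IsKingPath f)
    (hgap : ∀ a b, ¬((f b).1 = (f a).1 + 1 ∧ (f b).2 = (f a).2 + 1)) {s t : ℕ} (hst : s ≤ t) :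
    ¬((f s).1 < (f t).1 ∧ (f s).2 < (f t).2) := by
  induction t using Nat.strong_induction_on generalizing s with
  | _ t IH =>
  rintro ⟨h₁, h₂⟩
  obtain _ | m := t
  · obtain rfl : s = 0 := by omega
    omega
  obtain rfl | hsm := eq_or_lt_of_le hst
  · omega
  have IH' : ∀ a b, a ≤ b → b ≤ m → ¬((f a).1 < (f b).1 ∧ (f a).2 < (f b).2) :=
    fun a b hab hbm => IH b (by omega) hab
  have hlast := hstep m
  have hsm' := IH' s m (by omega) le_rfl
  simp only [abs_le] at hlast
  by_cases hm : (f m).1 = (f s).1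
  · exact not_lt_and_lt_of_chain_step hstep hgap (by omega) IH' h₁ h₂ hm
  · exact not_lt_and_lt_of_chain_step (f := Prod.swap ∘ f) (fun t => (hstep t).symm)
      (fun a b h => hgap a b h.symm) (by omega) (fun a b hab hbm h => IH' a b hab hbm h.symm)
      h₂ h₁ (by simp only [Function.comp, Prod.fst_swap]; omega)

theorem not_lt_and_lt_of_chain_of_abs_eq_one {f : ℕ → ℤ × ℤ} {β : ℤ × ℤ}
    (hβ : |β.1| = 1 ∧ |β.2| = 1)
    (hstep : IsKingPath f)
    (hgap : ∀ a b, f b ≠ f a + β) {s t : ℕ} (hst : s ≤ t) :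
    ¬(β.1 * (f s).1 < β.1 * (f t).1 ∧ β.2 * (f s).2 < β.2 * (f t).2) := by
  have hβ₁ : β.1 * β.1 = 1 := by rw [← abs_mul_abs_self, hβ.1, one_mul]
  have hβ₂ : β.2 * β.2 = 1 := by rw [← abs_mul_abs_self, hβ.2, one_mul]
  refine not_lt_and_lt_of_chain (f := fun t => (β.1 * (f t).1, β.2 * (f t).2)) (fun t => ?_)
    (fun a b ⟨h₁, h₂⟩ => hgap a b (Prod.ext ?_ ?_)) hst
  · simp only [← mul_sub, abs_mul, hβ.1, hβ.2, one_mul]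
    exact hstep t
  · rw [Prod.fst_add]
    linear_combination β.1 * h₁ - ((f b).1 - (f a).1) * hβ₁
  · rw [Prod.snd_add]
    linear_combination β.2 * h₂ - ((f b).2 - (f a).2) * hβ₂

lemma eq_or_abs_eq_one_of_digits {n : ℤ} {α b c β : ℤ × ℤ} (hβ : β = n • α + c - b)
    (hα : |α.1| ≤ 1 ∧ |α.2| ≤ 1) (hα0 : α ≠ (0, 0))
    (hb : (0 ≤ b.1 ∧ b.1 ≤ n - 1) ∧ 0 ≤ b.2 ∧ b.2 ≤ n - 1)
    (hc : (0 ≤ c.1 ∧ c.1 ≤ n - 1) ∧ 0 ≤ c.2 ∧ c.2 ≤ n - 1) (hβbox : |β.1| ≤ 1 ∧ |β.2| ≤ 1) :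
    β = α ∨ (|β.1| = 1 ∧ |β.2| = 1) := by
  have coord : ∀ {a b' c' β' : ℤ}, |a| ≤ 1 → 0 ≤ b' ∧ b' ≤ n - 1 → 0 ≤ c' ∧ c' ≤ n - 1 →
      β' = n * a + c' - b' → |β'| ≤ 1 → a = 0 ∨ β' = a := by
    intro a b' c' β' ha hb' hc' hβ' hβ'box
    rw [abs_le] at ha hβ'box
    rcases (by omega : a = -1 ∨ a = 0 ∨ a = 1) with rfl | rfl | rfl <;> omega
  have h₁ := coord hα.1 hb.1 hc.1 (by simp [hβ]) hβbox.1
  have h₂ := coord hα.2 hb.2 hc.2 (by simp [hβ]) hβbox.2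
  rw [Ne, Prod.ext_iff] at hα0
  simp only [abs_le] at hα hβbox
  rw [Prod.ext_iff, abs_eq zero_le_one, abs_eq zero_le_one]
  omega

namespace IsFractalSquare

variable {n : ℕ} {D : Set (ℤ × ℤ)} {K : Set (ℝ × ℝ)}

lemma two_le (hK : IsFractalSquare n D K) : 2 ≤ n := hK.1

lemma nonempty (hK : IsFractalSquare n D K) : K.Nonempty := hK.2.2.2.2.1

lemma isCompact (hK : IsFractalSquare n D K) : IsCompact K := hK.2.2.2.2.2.1

lemma eq_biUnion (hK : IsFractalSquare n D K) : K = ⋃ d ∈ D, pieceMap n d '' K :=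
  hK.2.2.2.2.2.2

lemma natCast_ne_zero (hK : IsFractalSquare n D K) : (n : ℝ) ≠ 0 :=
  Nat.cast_ne_zero.2 (by have := hK.two_le; omega)

lemma digit_bounds (hK : IsFractalSquare n D K) {d : ℤ × ℤ} (hd : d ∈ D) :
    (0 ≤ d.1 ∧ d.1 ≤ n - 1) ∧ 0 ≤ d.2 ∧ d.2 ≤ n - 1 := by
  obtain ⟨⟨h₁, h₂⟩, h₃, h₄⟩ := hK.2.1 hd
  exact ⟨⟨h₁, h₃⟩, h₂, h₄⟩

lemma finite_digits (hK : IsFractalSquare n D K) : D.Finite :=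
  Set.finite_coe_iff.1 (Nat.finite_of_card_ne_zero (by have := hK.2.2.1; omega))

lemma mem_iff (hK : IsFractalSquare n D K) {x : ℝ × ℝ} :
    x ∈ K ↔ ∃ d ∈ D, ∃ y ∈ K, pieceMap n d y = x := by
  conv_lhs => rw [hK.eq_biUnion]
  simp only [mem_iUnion, mem_image, exists_prop]

lemma pieceMap_mem (hK : IsFractalSquare n D K) {d : ℤ × ℤ} (hd : d ∈ D) {x : ℝ × ℝ}
    (hx : x ∈ K) : pieceMap n d x ∈ K :=
  hK.mem_iff.2 ⟨d, hd, x, hx, rfl⟩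

lemma image_subset_Icc (hK : IsFractalSquare n D K) (π : ℝ × ℝ →L[ℝ] ℝ)
    (hπ : ∀ d ∈ D, π (coeZ2 d) ∈ Icc 0 ((n : ℝ) - 1)) : π '' K ⊆ Icc 0 1 := by
  have hn : (1 : ℝ) < n := by have := hK.two_le; exact_mod_cast this
  refine subset_Icc_of_forall_mul_eq_add (hK.isCompact.image π.continuous) hn ?_
  rintro _ ⟨z, hz, rfl⟩
  obtain ⟨d, hd, y, hy, rfl⟩ := hK.mem_iff.1 hz
  refine ⟨π y, mem_image_of_mem π hy, π (coeZ2 d), hπ d hd, ?_⟩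
  rw [pieceMap, map_smul, smul_eq_mul, mul_inv_cancel_left₀ hK.natCast_ne_zero, map_add]

lemma mem_unitSquare (hK : IsFractalSquare n D K) {x : ℝ × ℝ} (hx : x ∈ K) :
    x.1 ∈ Icc (0 : ℝ) 1 ∧ x.2 ∈ Icc (0 : ℝ) 1 := by
  have cast_bounds : ∀ {a : ℤ}, 0 ≤ a ∧ a ≤ n - 1 → (a : ℝ) ∈ Icc 0 ((n : ℝ) - 1) :=
    fun ⟨h₀, h₁⟩ => ⟨by exact_mod_cast h₀, by exact_mod_cast h₁⟩
  exact ⟨hK.image_subset_Icc (.fst ℝ ℝ ℝ) (fun d hd => cast_bounds (hK.digit_bounds hd).1)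
      (mem_image_of_mem _ hx),
    hK.image_subset_Icc (.snd ℝ ℝ ℝ) (fun d hd => cast_bounds (hK.digit_bounds hd).2)
      (mem_image_of_mem _ hx)⟩

lemma abs_le_one_of_sub_eq (hK : IsFractalSquare n D K) {x y : ℝ × ℝ} (hx : x ∈ K)
    (hy : y ∈ K) {β : ℤ × ℤ} (h : x - y = coeZ2 β) : |β.1| ≤ 1 ∧ |β.2| ≤ 1 := by
  obtain ⟨⟨hx₁, hx₁'⟩, hx₂, hx₂'⟩ := hK.mem_unitSquare hx
  obtain ⟨⟨hy₁, hy₁'⟩, hy₂, hy₂'⟩ := hK.mem_unitSquare hy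
  have h₁ : (β.1 : ℝ) = x.1 - y.1 := by rw [← coeZ2_fst, ← h, Prod.fst_sub]
  have h₂ : (β.2 : ℝ) = x.2 - y.2 := by rw [← coeZ2_snd, ← h, Prod.snd_sub]
  have : |(β.1 : ℝ)| ≤ 1 ∧ |(β.2 : ℝ)| ≤ 1 := by
    rw [h₁, h₂, abs_le, abs_le]
    exact ⟨⟨by linarith, by linarith⟩, by linarith, by linarith⟩
  exact_mod_cast this

lemma abs_sub_le_one_of_inter_nonempty (hK : IsFractalSquare n D K) {a b : ℤ × ℤ}
    (h : (pieceMap n a '' K ∩ pieceMap n b '' K).Nonempty) :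
    |b.1 - a.1| ≤ 1 ∧ |b.2 - a.2| ≤ 1 := by
  obtain ⟨z, hza, hzb⟩ := h
  rw [mem_image_pieceMap hK.natCast_ne_zero] at hza hzb
  exact hK.abs_le_one_of_sub_eq hza hzb (β := b - a) (by rw [coeZ2_sub]; abel)

lemma reflTransGen_contact (hK : IsFractalSquare n D K) (hconn : IsConnected K) {d d' : ℤ × ℤ}
    (hd : d ∈ D) (hd' : d' ∈ D) :
    Relation.ReflTransGen
      (fun a b => a ∈ D ∧ b ∈ D ∧ (pieceMap n a '' K ∩ pieceMap n b '' K).Nonempty) d d' :=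
  hK.finite_digits.reflTransGen_of_isPreconnected_biUnion
    (fun e _ => (hK.isCompact.image (continuous_pieceMap n e)).isClosed)
    (fun e _ => hK.nonempty.image _)
    (by rw [← hK.eq_biUnion]; exact hconn.isPreconnected) hd hd'

lemma exists_contact_chain (hK : IsFractalSquare n D K) (hconn : IsConnected K) {d d' : ℤ × ℤ}
    (hd : d ∈ D) (hd' : d' ∈ D) :
    ∃ (f : ℕ → ℤ × ℤ) (L : ℕ), f 0 = d ∧ f L = d' ∧ (∀ t, f t ∈ D) ∧ IsKingPath f := by
  obtain ⟨f, L, hf0, hfL, hf⟩ := (hK.reflTransGen_contact hconn hd hd').exists_seq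
  refine ⟨f, L, hf0, hfL, fun t => ?_, fun t => ?_⟩
  · induction t with
    | zero => exact hf0 ▸ hd
    | succ t ih =>
      rcases (Relation.reflGen_iff _ _ _).1 (hf t) with h | ⟨-, h, -⟩
      · exact h ▸ ih
      · exact h
  · rcases (Relation.reflGen_iff _ _ _).1 (hf t) with h | ⟨-, -, h⟩
    · simp [h]
    · exact hK.abs_sub_le_one_of_inter_nonempty h

lemma exists_add_mem_of_sub_mem (hK : IsFractalSquare n D K) (hconn : IsConnected K)
    {x : ℝ × ℝ} (hx : x ∈ K) {β : ℤ × ℤ} (hxβ : x - coeZ2 β ∈ K)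
    (hβ : |β.1| = 1 ∧ |β.2| = 1) : ∃ p ∈ D, p + β ∈ D := by
  have hn0 := hK.natCast_ne_zero
  obtain ⟨d, hd, y, hy, rfl⟩ := hK.mem_iff.1 hx
  obtain ⟨e, he, z, hz, hze⟩ := hK.mem_iff.1 hxβ
  have hyz : y - z = coeZ2 ((n : ℤ) • β - (d - e)) := by
    have h₁ := smul_pieceMap hn0 d y
    have h₂ := smul_pieceMap hn0 e z
    rw [hze, smul_sub] at h₂
    rw [coeZ2_sub, coeZ2_sub, coeZ2_zsmul, Int.cast_natCast]
    linear_combination (norm := module) h₂ - h₁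
  -- `n • β - (d - e) = y - z` is small, so `d - e` points along `β` in both coordinates
  have hsep : ∀ {ε u : ℤ}, |ε| = 1 → |n * ε - u| ≤ 1 → 0 < ε * u := by
    intro ε u hε h
    rw [abs_eq zero_le_one] at hε
    rw [abs_le] at h
    have := hK.two_le
    rcases hε with rfl | rfl <;> omega
  obtain ⟨h₁, h₂⟩ := hK.abs_le_one_of_sub_eq hy hz hyz
  by_contra! hno
  obtain ⟨f, L, hf0, hfL, hfD, hstep⟩ := hK.exists_contact_chain hconn he hd
  refine not_lt_and_lt_of_chain_of_abs_eq_one hβ hstep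
    (fun a b h => hno _ (hfD a) (h ▸ hfD b)) (Nat.zero_le L) ?_
  rw [hf0, hfL]
  simp only [Prod.fst_sub, Prod.snd_sub, Prod.smul_fst, Prod.smul_snd, smul_eq_mul] at h₁ h₂
  exact ⟨by linarith [hsep hβ.1 h₁, mul_sub β.1 d.1 e.1],
    by linarith [hsep hβ.2 h₂, mul_sub β.2 d.2 e.2]⟩

lemma exists_mem_Fset_of_sub_eq (hK : IsFractalSquare n D K) {x y : ℝ × ℝ} (hx : x ∈ K)
    (hy : y ∈ K) {β : ℤ × ℤ} (hxy : x - y = coeZ2 β) (hβ : β ≠ (0, 0)) {q : ℤ × ℤ}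
    (hq : q ∈ D) (hqβ : q + β ∈ D) : ∃ α ∈ adjDirs D, x ∈ Fset K α :=
  ⟨β, mem_adjDirs_iff.2 ⟨hK.abs_le_one_of_sub_eq hx hy hxy, hβ, q, hq, hqβ⟩,
    mem_Fset_iff.2 ⟨hx, by rwa [← hxy, sub_sub_cancel]⟩⟩

lemma exists_mem_Fset_of_pieceMap_mem_criticalSet (hK : IsFractalSquare n D K) {x : ℝ × ℝ}
    (hx : x ∈ K) {d : ℤ × ℤ} (hd : d ∈ D) (h : pieceMap n d x ∈ criticalSet n D K) :
    ∃ α ∈ adjDirs D, x ∈ Fset K α := by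
  obtain ⟨e, he, e', he', hee', h₁, h₂⟩ := mem_criticalSet_iff.1 h
  obtain ⟨g, hg, hgd, hxg⟩ : ∃ g ∈ D, g ≠ d ∧ pieceMap n d x ∈ pieceMap n g '' K := by
    by_cases hed : e = d
    · exact ⟨e', he', fun h => hee' (hed.trans h.symm), h₂⟩
    · exact ⟨e, he, hed, h₁⟩
  rw [mem_image_pieceMap hK.natCast_ne_zero, smul_pieceMap hK.natCast_ne_zero] at hxg
  refine hK.exists_mem_Fset_of_sub_eq hx hxg (β := g - d) (by rw [coeZ2_sub]; abel)
    ?_ hd (by rwa [add_sub_cancel])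
  rwa [Prod.mk_zero_zero, Ne, sub_eq_zero]

lemma exists_mem_Fset_of_pieceMap_mem_Fset (hK : IsFractalSquare n D K) (hconn : IsConnected K)
    {x : ℝ × ℝ} (hx : x ∈ K) {b : ℤ × ℤ} (hb : b ∈ D)
    (h : ∃ α ∈ adjDirs D, pieceMap n b x ∈ Fset K α) : ∃ α ∈ adjDirs D, x ∈ Fset K α := by
  have hn0 := hK.natCast_ne_zero
  obtain ⟨α, hα, hu⟩ := h
  obtain ⟨hαbox, hα0, q, hq, hqα⟩ := mem_adjDirs_iff.1 hα
  obtain ⟨c, hc, y, hy, hcy⟩ := hK.mem_iff.1 (mem_Fset_iff.1 hu).2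
  obtain ⟨β, hβ⟩ : ∃ β, β = (n : ℤ) • α + c - b := ⟨_, rfl⟩
  have hxy : x - y = coeZ2 β := by
    have h₁ := smul_pieceMap hn0 b x
    have h₂ := smul_pieceMap hn0 c y
    rw [hcy, smul_sub] at h₂
    rw [hβ, coeZ2_sub, coeZ2_add, coeZ2_zsmul, Int.cast_natCast]
    linear_combination (norm := module) h₂ - h₁
  rcases eq_or_abs_eq_one_of_digits hβ hαbox hα0 (hK.digit_bounds hb) (hK.digit_bounds hc)
    (hK.abs_le_one_of_sub_eq hx hy hxy) with rfl | hdiag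
  · exact hK.exists_mem_Fset_of_sub_eq hx hy hxy hα0 hq hqα
  · obtain ⟨p, hp, hpβ⟩ :=
      hK.exists_add_mem_of_sub_mem hconn hx (by rwa [← hxy, sub_sub_cancel]) hdiag
    refine hK.exists_mem_Fset_of_sub_eq hx hy hxy (fun h0 => ?_) hp hpβ
    simp [h0] at hdiag

lemma ssBoundary_subset (hK : IsFractalSquare n D K) (hconn : IsConnected K) :
    ssBoundary n D K ⊆ ⋃ α ∈ adjDirs D, Fset K α := by
  rintro x ⟨hx, k, hk, d, hd, hC⟩
  obtain ⟨m, rfl⟩ := Nat.exists_eq_add_of_le' hk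
  clear hk
  simp only [mem_iUnion, exists_prop]
  induction m generalizing x d with
  | zero =>
    rw [Dpow_one] at hd
    rw [zero_add, pow_one] at hC
    exact hK.exists_mem_Fset_of_pieceMap_mem_criticalSet hx hd hC
  | succ m ih =>
    obtain ⟨a, ha, b, hb, rfl⟩ := hd
    rw [inv_pow_succ_smul_add_coeZ2 hK.natCast_ne_zero] at hC
    exact hK.exists_mem_Fset_of_pieceMap_mem_Fset hconn hx hb (ih (hK.pieceMap_mem hb hx) _ ha hC)

end IsFractalSquare

lemma Fset_subset_ssBoundary {n : ℕ} {D : Set (ℤ × ℤ)} {K : Set (ℝ × ℝ)} {α : ℤ × ℤ}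
    (hα : α ∈ adjDirs D) : Fset K α ⊆ ssBoundary n D K := by
  intro x hx
  obtain ⟨-, hα0, q, hq, hqα⟩ := mem_adjDirs_iff.1 hα
  obtain ⟨hxK, hxα⟩ := mem_Fset_iff.1 hx
  refine ⟨hxK, 1, le_rfl, q, (Dpow_one n D).symm ▸ hq, ?_⟩
  rw [pow_one]
  refine mem_criticalSet_iff.2 ⟨q, hq, q + α, hqα, ?_, mem_image_of_mem _ hxK, ?_⟩
  · rwa [Ne, left_eq_add, ← Prod.mk_zero_zero]
  · exact ⟨x - coeZ2 α, hxα, pieceMap_add_sub n q α x⟩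

/-- For a connected fractal square `K`, the self-similar boundary
is `∂K = ⋃_{α ∈ A_D} F_α`, where `F_α = K ∩ (K + α)`. -/
theorem fractalSquare_ssBoundary_eq_union_faces
    (n : ℕ) (D : Set (ℤ × ℤ)) (K : Set (ℝ × ℝ))
    (hK : IsFractalSquare n D K) (hconn : IsConnected K) :
    ssBoundary n D K = ⋃ α ∈ adjDirs D, Fset K α :=
  (hK.ssBoundary_subset hconn).antisymm (iUnion₂_subset fun _ hα => Fset_subset_ssBoundary hα)
end
end

section
/- Let K be a fractal square of order n with digit set D. For every α ∈ A = {−1,0,1}², the face K_α = K ∩ P_α satisfies the self-similar equation K_α = (K_α + D_α)/n, where D_α = D ∩ ((n−1)·P_α). -/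
open Set Pointwise

noncomputable section

/-- The unit square `P = [0,1]²`. -/
def unitSq : Set (ℝ × ℝ) := Set.Icc (0, 0) (1, 1)

/-- The face `P_α = P ∩ (P + α)` of the unit square. -/
def faceP (α : ℤ × ℤ) : Set (ℝ × ℝ) := unitSq ∩ ((· + coeZ2 α) '' unitSq)

/-- The face digit set `D_α = D ∩ ((n-1)·P_α)`. -/
def faceD (n : ℕ) (D : Set (ℤ × ℤ)) (α : ℤ × ℤ) : Set (ℤ × ℤ) :=
  {d ∈ D | coeZ2 d ∈ ((n : ℝ) - 1) • faceP α}

/-!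
For every `α ∈ ℤ²` the set `P_α` is an extreme subset (a face) of the convex square `P`: it is the
product of the faces `[0,1] ∩ [k, k+1]` of `[0,1]`. A fractal square lies in `P`, and the point
`(y + d)/n` lies in the open segment from `y ∈ P` to `d/(n-1) ∈ P`; so it lies in the convex face
`P_α` exactly when both `y` and `d/(n-1)` do, which is the self-similarity of `K_α`.
-/

theorem IsExtreme.mem_iff_of_mem_openSegment {𝕜 E : Type*} [Semiring 𝕜] [PartialOrder 𝕜]
    [AddCommMonoid E] [Module 𝕜 E] {A B : Set E} (hAB : IsExtreme 𝕜 A B) (hB : Convex 𝕜 B)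
    {x y z : E} (hy : y ∈ A) (hz : z ∈ A) (hx : x ∈ openSegment 𝕜 y z) :
    x ∈ B ↔ y ∈ B ∧ z ∈ B :=
  ⟨fun h ↦ ⟨hAB.left_mem_of_mem_openSegment hy hz h hx,
      hAB.right_mem_of_mem_openSegment hy hz h hx⟩,
    fun h ↦ hB.openSegment_subset h.1 h.2 hx⟩

theorem IsExtreme.prod {𝕜 E F : Type*} [Semiring 𝕜] [PartialOrder 𝕜] [AddCommMonoid E]
    [Module 𝕜 E] [AddCommMonoid F] [Module 𝕜 F] {A B : Set E} {A' B' : Set F}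
    (hAB : IsExtreme 𝕜 A B) (hAB' : IsExtreme 𝕜 A' B') :
    IsExtreme 𝕜 (A ×ˢ A') (B ×ˢ B') := by
  refine ⟨Set.prod_mono hAB.subset hAB'.subset, fun x hx y hy z hz hzxy ↦ ?_⟩
  obtain ⟨a, b, ha, hb, hab, rfl⟩ := hzxy
  exact ⟨hAB.left_mem_of_mem_openSegment hx.1 hy.1 hz.1 ⟨a, b, ha, hb, hab, rfl⟩,
    hAB'.left_mem_of_mem_openSegment hx.2 hy.2 hz.2 ⟨a, b, ha, hb, hab, rfl⟩⟩

theorem isExtreme_Icc_inter_Icc_intCast (k : ℤ) :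
    IsExtreme ℝ (Icc (0 : ℝ) 1) (Icc 0 1 ∩ Icc (k : ℝ) (k + 1)) := by
  refine ⟨inter_subset_left, fun x hx y hy z hz hzxy ↦ ⟨hx, ?_⟩⟩
  obtain ⟨a, b, ha, hb, hab, rfl⟩ := hzxy
  obtain ⟨hx0, hx1⟩ := hx
  obtain ⟨hy0, hy1⟩ := hy
  obtain ⟨hk, hk'⟩ := hz.2
  simp only [smul_eq_mul] at hk hk'
  have hk₁ : (k : ℝ) ≤ 0 ∨ 1 ≤ (k : ℝ) := by exact_mod_cast (by omega : k ≤ 0 ∨ 1 ≤ k)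
  have hk₂ : 0 ≤ (k : ℝ) ∨ (k : ℝ) + 1 ≤ 0 := by exact_mod_cast (by omega : 0 ≤ k ∨ k + 1 ≤ 0)
  constructor
  · rcases hk₁ with h | h
    · linarith
    · nlinarith
  · rcases hk₂ with h | h
    · linarith
    · nlinarith

theorem unitSq_eq_prod : unitSq = Icc (0 : ℝ) 1 ×ˢ Icc (0 : ℝ) 1 :=
  (Icc_prod_Icc _ _ _ _).symm

theorem faceP_eq_prod (α : ℤ × ℤ) :
    faceP α = (Icc 0 1 ∩ Icc (α.1 : ℝ) (α.1 + 1)) ×ˢ (Icc 0 1 ∩ Icc (α.2 : ℝ) (α.2 + 1)) := by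
  rw [faceP, unitSq, image_add_const_Icc, ← prod_inter_prod, Icc_prod_Icc, Icc_prod_Icc]
  simp [coeZ2, add_comm]

theorem isExtreme_unitSq_faceP (α : ℤ × ℤ) : IsExtreme ℝ unitSq (faceP α) := by
  rw [unitSq_eq_prod, faceP_eq_prod]
  exact (isExtreme_Icc_inter_Icc_intCast α.1).prod (isExtreme_Icc_inter_Icc_intCast α.2)

theorem convex_faceP (α : ℤ × ℤ) : Convex ℝ (faceP α) := by
  rw [faceP_eq_prod]
  exact ((convex_Icc _ _).inter (convex_Icc _ _)).prod ((convex_Icc _ _).inter (convex_Icc _ _))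

-- `(x + d)/n = (1/n) x + (1 - 1/n) (d/(n-1))`
theorem pieceMap_mem_openSegment {n : ℕ} (hn : 2 ≤ n) (d : ℤ × ℤ) (x : ℝ × ℝ) :
    pieceMap n d x ∈ openSegment ℝ x (((n : ℝ) - 1)⁻¹ • coeZ2 d) := by
  have hn' : (1 : ℝ) < n := by exact_mod_cast hn
  have hn1 : (n : ℝ) - 1 ≠ 0 := by linarith
  refine ⟨(n : ℝ)⁻¹, 1 - (n : ℝ)⁻¹, by positivity, sub_pos.2 (inv_lt_one_of_one_lt₀ hn'),
    by ring, ?_⟩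
  rw [pieceMap, smul_add, smul_smul]
  congr 2
  field_simp

theorem inv_smul_coeZ2_mem_unitSq {n : ℕ} (hn : 2 ≤ n) {d : ℤ × ℤ}
    (hd : d ∈ Icc (0, 0) ((n : ℤ) - 1, (n : ℤ) - 1)) :
    ((n : ℝ) - 1)⁻¹ • coeZ2 d ∈ unitSq := by
  have hn' : (0 : ℝ) < n - 1 := by
    have : (2 : ℝ) ≤ n := by exact_mod_cast hn
    linarith
  obtain ⟨⟨h1, h2⟩, h3, h4⟩ := hd
  have h3' : (d.1 : ℝ) ≤ n - 1 := by exact_mod_cast h3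
  have h4' : (d.2 : ℝ) ≤ n - 1 := by exact_mod_cast h4
  refine ⟨⟨?_, ?_⟩, ?_, ?_⟩ <;>
    simp only [coeZ2, Prod.smul_mk, smul_eq_mul, ← div_eq_inv_mul]
  · exact div_nonneg (by exact_mod_cast h1) hn'.le
  · exact div_nonneg (by exact_mod_cast h2) hn'.le
  · exact (div_le_one hn').2 h3'
  · exact (div_le_one hn').2 h4'

theorem pieceMap_mem_faceP_iff {n : ℕ} (hn : 2 ≤ n) {d : ℤ × ℤ}
    (hd : d ∈ Icc (0, 0) ((n : ℤ) - 1, (n : ℤ) - 1)) {x : ℝ × ℝ} (hx : x ∈ unitSq)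
    (α : ℤ × ℤ) :
    pieceMap n d x ∈ faceP α ↔ x ∈ faceP α ∧ coeZ2 d ∈ ((n : ℝ) - 1) • faceP α := by
  have hn1 : (n : ℝ) - 1 ≠ 0 := by
    have : (2 : ℝ) ≤ n := by exact_mod_cast hn
    linarith
  rw [mem_smul_set_iff_inv_smul_mem₀ hn1]
  exact (isExtreme_unitSq_faceP α).mem_iff_of_mem_openSegment (convex_faceP α) hx
    (inv_smul_coeZ2_mem_unitSq hn hd) (pieceMap_mem_openSegment hn d x)

-- At a point `z` where `L` is maximal on `K`, write `z = (y + d)/n`; then `n L z ≤ L z + (n-1) c`.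
theorem le_of_forall_digit_le {n : ℕ} (hn : 1 < n) {D : Set (ℤ × ℤ)} {K : Set (ℝ × ℝ)}
    (hcomp : IsCompact K) (heq : K = ⋃ d ∈ D, pieceMap n d '' K)
    (L : ℝ × ℝ →L[ℝ] ℝ) (c : ℝ) (hD : ∀ d ∈ D, L (coeZ2 d) ≤ (n - 1) * c) :
    ∀ x ∈ K, L x ≤ c := by
  intro x hx
  obtain ⟨z, hzK, hzmax⟩ := hcomp.exists_isMaxOn ⟨x, hx⟩ L.continuous.continuousOn
  have hz := hzK
  rw [heq] at hz
  simp only [mem_iUnion, mem_image, exists_prop] at hz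
  obtain ⟨d, hdD, y, hyK, rfl⟩ := hz
  have hLz : (n : ℝ) * L (pieceMap n d y) = L y + L (coeZ2 d) := by
    have : (n : ℝ) ≠ 0 := by positivity
    rw [pieceMap, map_smul, map_add, smul_eq_mul, mul_inv_cancel_left₀ this]
  have hn' : (1 : ℝ) < n := by exact_mod_cast hn
  have hLy : L y ≤ L (pieceMap n d y) := hzmax hyK
  have hLz_le : L (pieceMap n d y) ≤ c :=
    le_of_mul_le_mul_left (by linarith [hD d hdD] : (n - 1) * L (pieceMap n d y) ≤ (n - 1) * c)
      (by linarith)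
  exact (hzmax hx).trans hLz_le

theorem IsFractalSquare.subset_unitSq {n : ℕ} {D : Set (ℤ × ℤ)} {K : Set (ℝ × ℝ)}
    (hK : IsFractalSquare n D K) : K ⊆ unitSq := by
  obtain ⟨hn, hD, -, -, -, hcomp, heq⟩ := hK
  have hD' : ∀ d ∈ D, (0 : ℝ) ≤ d.1 ∧ (0 : ℝ) ≤ d.2 ∧ (d.1 : ℝ) ≤ n - 1 ∧ (d.2 : ℝ) ≤ n - 1 := by
    intro d hd
    obtain ⟨⟨h1, h2⟩, h3, h4⟩ := hD hd
    exact ⟨by exact_mod_cast h1, by exact_mod_cast h2, by exact_mod_cast h3, by exact_mod_cast h4⟩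
  have bound := le_of_forall_digit_le hn hcomp heq
  intro x hx
  refine ⟨⟨?_, ?_⟩, ?_, ?_⟩
  · simpa using bound (-ContinuousLinearMap.fst ℝ ℝ ℝ) 0
      (fun d hd ↦ by simpa [coeZ2] using (hD' d hd).1) x hx
  · simpa using bound (-ContinuousLinearMap.snd ℝ ℝ ℝ) 0
      (fun d hd ↦ by simpa [coeZ2] using (hD' d hd).2.1) x hx
  · simpa using bound (ContinuousLinearMap.fst ℝ ℝ ℝ) 1
      (fun d hd ↦ by simpa [coeZ2] using (hD' d hd).2.2.1) x hx
  · simpa using bound (ContinuousLinearMap.snd ℝ ℝ ℝ) 1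
      (fun d hd ↦ by simpa [coeZ2] using (hD' d hd).2.2.2) x hx

theorem fractalSquare_face_selfSimilar_general
    (n : ℕ) (D : Set (ℤ × ℤ)) (K : Set (ℝ × ℝ))
    (hK : IsFractalSquare n D K)
    (α : ℤ × ℤ) :
    K ∩ faceP α = ⋃ d ∈ faceD n D α, pieceMap n d '' (K ∩ faceP α) := by
  have hKP := hK.subset_unitSq
  obtain ⟨hn, hD, -, -, -, -, heq⟩ := hK
  ext x
  simp only [faceD, mem_inter_iff, mem_iUnion, mem_image, exists_prop, mem_sep_iff]
  constructor
  · rintro ⟨hxK, hxF⟩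
    rw [heq] at hxK
    simp only [mem_iUnion, mem_image, exists_prop] at hxK
    obtain ⟨d, hdD, y, hyK, rfl⟩ := hxK
    obtain ⟨hyF, hdF⟩ := (pieceMap_mem_faceP_iff hn (hD hdD) (hKP hyK) α).1 hxF
    exact ⟨d, ⟨hdD, hdF⟩, y, ⟨hyK, hyF⟩, rfl⟩
  · rintro ⟨d, ⟨hdD, hdF⟩, y, ⟨hyK, hyF⟩, rfl⟩
    refine ⟨?_, (pieceMap_mem_faceP_iff hn (hD hdD) (hKP hyK) α).2 ⟨hyF, hdF⟩⟩
    rw [heq]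
    exact mem_biUnion hdD (mem_image_of_mem _ hyK)

/-- For every `α ∈ A = {-1,0,1}²`, the face `K_α = K ∩ P_α` of a
fractal square satisfies the self-similar equation `K_α = (K_α + D_α)/n`. -/
theorem fractalSquare_face_selfSimilar
    (n : ℕ) (D : Set (ℤ × ℤ)) (K : Set (ℝ × ℝ))
    (hK : IsFractalSquare n D K)
    (α : ℤ × ℤ) (hα : α ∈ ({-1, 0, 1} ×ˢ {-1, 0, 1} : Set (ℤ × ℤ))) :
    K ∩ faceP α = ⋃ d ∈ faceD n D α, pieceMap n d '' (K ∩ faceP α) :=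
  fractalSquare_face_selfSimilar_general n D K hK α
end
end

section
/- Let K be a fractal square of order n with digit set D. Let α ∈ {(1,0),(−1,0),(0,1),(0,−1)} and let β be a unit coordinate vector orthogonal to α. Then F_α = (F_α + G_α)/n ∪ (F_{α+β} + G_{α,β})/n ∪ (F_{α−β} + G_{α,−β})/n, where F_γ = K ∩ (K + γ) for γ ∈ {−1,0,1}², G_α = D_α ∩ (D_{−α} + (n−1)α), G_{α,β} = D_α ∩ (D_{−α} + (n−1)α − β), and G_{α,−β} = D_α ∩ (D_{−α} + (n−1)α + β). -/
open Set Pointwise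

noncomputable section

/-- `G_{α,β} = D_α ∩ (D_{-α} + (n-1)α - β)`. -/
def Gset (n : ℕ) (D : Set (ℤ × ℤ)) (α β : ℤ × ℤ) : Set (ℤ × ℤ) :=
  faceD n D α ∩ ((fun d => d + (((n : ℤ) - 1) • α - β)) '' faceD n D (-α))

/-! Since `K = ⋃_{d ∈ D} (K + d)/n`, the set `K ∩ (K + α)` is the union over pairs of digits
`d, d' ∈ D` of the pieces `(F_γ + d)/n` with `γ = d' + nα - d`. As `K ⊆ [0,1]²`, a piece can be
nonempty only if `γ ∈ {-1,0,1}²`. In the coordinate where `α = ±1` this forces `γ` to agree with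
`α`, `d` to lie on the face `α` and `d'` on the face `-α` of the digit square; the other
coordinate of `γ` ranges over `{-1,0,1}`, so `γ ∈ {α, α + β, α - β}`. -/

open Metric in
theorem subset_of_subset_iUnion_image_of_lipschitzWith {X ι : Type*} [MetricSpace X]
    [ProperSpace X] {K S : Set X} {I : Set ι} {f : ι → X → X} {c : NNReal} (hc : c < 1)
    (hf : ∀ i ∈ I, LipschitzWith c (f i)) (hfS : ∀ i ∈ I, MapsTo (f i) S S)
    (hK : IsCompact K) (hS : IsClosed S) (hSne : S.Nonempty) (hKf : K ⊆ ⋃ i ∈ I, f i '' K) :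
    K ⊆ S := by
  rcases K.eq_empty_or_nonempty with rfl | hKne
  · exact empty_subset S
  -- a point `x ∈ K` farthest from `S` is the image of a point of `K` at most as far from `S`,
  -- and `f i` shrinks that distance by the factor `c < 1`
  obtain ⟨x, hxK, hmax⟩ := hK.exists_isMaxOn hKne (continuous_infDist_pt S).continuousOn
  have hx : infDist x S = 0 := by
    obtain ⟨i, hi, y, hyK, rfl⟩ : ∃ i ∈ I, ∃ y ∈ K, f i y = x := by simpa using hKf hxK
    obtain ⟨z, hzS, hz⟩ := hS.exists_infDist_eq_dist hSne y
    have : infDist (f i y) S ≤ c * infDist (f i y) S :=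
      calc infDist (f i y) S ≤ dist (f i y) (f i z) := infDist_le_dist_of_mem (hfS i hi hzS)
        _ ≤ c * dist y z := (hf i hi).dist_le_mul y z
        _ ≤ c * infDist (f i y) S := by rw [← hz]; gcongr; exact hmax hyK
    have hc' : (c : ℝ) < 1 := hc
    nlinarith [infDist_nonneg (x := f i y) (s := S)]
  intro y hy
  rw [hS.mem_iff_infDist_zero hSne]
  exact le_antisymm (hx ▸ hmax hy) infDist_nonneg

lemma coeZ2_add_s7 (u v : ℤ × ℤ) : coeZ2 (u + v) = coeZ2 u + coeZ2 v := by
  simp [coeZ2]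

lemma coeZ2_sub_s7 (u v : ℤ × ℤ) : coeZ2 (u - v) = coeZ2 u - coeZ2 v := by
  simp [coeZ2]

lemma coeZ2_zsmul_s7 (c : ℤ) (v : ℤ × ℤ) : coeZ2 (c • v) = (c : ℝ) • coeZ2 v := by
  simp [coeZ2]

lemma coeZ2_nsmul (n : ℕ) (v : ℤ × ℤ) : coeZ2 (n • v) = (n : ℝ) • coeZ2 v := by
  simp [coeZ2]

lemma lipschitzWith_pieceMap (n : ℕ) (d : ℤ × ℤ) :
    LipschitzWith (n : NNReal)⁻¹ (pieceMap n d) := by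
  refine LipschitzWith.of_dist_le_mul fun x y => ?_
  simp [pieceMap, dist_smul₀]

lemma pieceMap_injective {n : ℕ} (hn : n ≠ 0) (d : ℤ × ℤ) :
    Function.Injective (pieceMap n d) := fun x y h => by
  simpa [pieceMap, hn] using h

lemma pieceMap_add_coeZ2 {n : ℕ} (hn : n ≠ 0) (d d' α : ℤ × ℤ) (y : ℝ × ℝ) :
    pieceMap n d' y + coeZ2 α = pieceMap n d (y + coeZ2 (d' + n • α - d)) := by
  simp only [pieceMap, coeZ2_sub_s7, coeZ2_add_s7, coeZ2_nsmul, smul_add, smul_sub, smul_smul]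
  rw [inv_mul_cancel₀ (by exact_mod_cast hn), one_smul]
  abel

lemma mapsTo_pieceMap_unitSq {n : ℕ} {d : ℤ × ℤ}
    (hd : d ∈ Icc (0, 0) ((n : ℤ) - 1, (n : ℤ) - 1)) : MapsTo (pieceMap n d) unitSq unitSq := by
  obtain ⟨⟨h1, h2⟩, h3, h4⟩ := hd
  have hn : (0 : ℝ) < n := by exact_mod_cast (show 0 < n by omega)
  have h3' : (d.1 : ℝ) ≤ n - 1 := by exact_mod_cast h3
  have h4' : (d.2 : ℝ) ≤ n - 1 := by exact_mod_cast h4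
  have h1' : (0 : ℝ) ≤ d.1 := by exact_mod_cast h1
  have h2' : (0 : ℝ) ≤ d.2 := by exact_mod_cast h2
  rintro x ⟨⟨hx1, hx2⟩, hx3, hx4⟩
  simp only [unitSq, pieceMap, coeZ2, mem_Icc, Prod.le_def, Prod.smul_fst, Prod.smul_snd,
    Prod.fst_add, Prod.snd_add, smul_eq_mul, inv_mul_le_iff₀ hn] at *
  exact ⟨⟨by positivity, by positivity⟩, by linarith, by linarith⟩

lemma Fset_eq_iUnion_pieceMap {n : ℕ} (hn : n ≠ 0) {D : Set (ℤ × ℤ)} {K : Set (ℝ × ℝ)}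
    (hfix : K = ⋃ d ∈ D, pieceMap n d '' K) (α : ℤ × ℤ) :
    Fset K α = ⋃ d ∈ D, ⋃ d' ∈ D, pieceMap n d '' Fset K (d' + n • α - d) :=
  calc Fset K α
      = (⋃ d ∈ D, pieceMap n d '' K) ∩ (· + coeZ2 α) '' ⋃ d' ∈ D, pieceMap n d' '' K := by
        rw [Fset, ← hfix]
    _ = ⋃ d ∈ D, ⋃ d' ∈ D, pieceMap n d '' K ∩ (· + coeZ2 α) '' (pieceMap n d' '' K) := by
        rw [image_iUnion₂, iUnion₂_inter]; simp_rw [inter_iUnion₂]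
    _ = ⋃ d ∈ D, ⋃ d' ∈ D, pieceMap n d '' Fset K (d' + n • α - d) := by
        refine iUnion₂_congr fun d _ => iUnion₂_congr fun d' _ => ?_
        rw [Fset, image_inter (pieceMap_injective hn d), image_image, image_image]
        simp_rw [pieceMap_add_coeZ2 hn d d' α]

lemma abs_le_one_of_Fset_nonempty {K : Set (ℝ × ℝ)} (hK : K ⊆ unitSq) {γ : ℤ × ℤ}
    (h : (Fset K γ).Nonempty) : |γ.1| ≤ 1 ∧ |γ.2| ≤ 1 := by
  obtain ⟨_, hyK, z, hzK, rfl⟩ := h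
  obtain ⟨⟨hy1, hy2⟩, hy3, hy4⟩ := hK hyK
  obtain ⟨⟨hz1, hz2⟩, hz3, hz4⟩ := hK hzK
  simp only [coeZ2, Prod.fst_add, Prod.snd_add] at hy1 hy2 hy3 hy4 hz1 hz2 hz3 hz4
  have : |(γ.1 : ℝ)| ≤ 1 ∧ |(γ.2 : ℝ)| ≤ 1 := by
    simp only [abs_le]
    refine ⟨⟨?_, ?_⟩, ?_, ?_⟩ <;> linarith
  exact_mod_cast this

lemma inv_smul_coeZ2_mem_unitSq_iff {c : ℤ} (hc : 0 < c) (v : ℤ × ℤ) :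
    (c : ℝ)⁻¹ • coeZ2 v ∈ unitSq ↔ v ∈ Icc (0, 0) (c, c) := by
  have hc' : (0 : ℝ) < c := by exact_mod_cast hc
  simp only [unitSq, coeZ2, mem_Icc, Prod.le_def, Prod.smul_fst, Prod.smul_snd, smul_eq_mul,
    inv_mul_le_iff₀ hc', mul_one, mul_nonneg_iff_of_pos_left (inv_pos.2 hc')]
  norm_cast

lemma coeZ2_mem_smul_faceP_iff {c : ℤ} (hc : 0 < c) (d α : ℤ × ℤ) :
    coeZ2 d ∈ (c : ℝ) • faceP α ↔ d ∈ Icc (0, 0) (c, c) ∧ d - c • α ∈ Icc (0, 0) (c, c) := by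
  have hc' : (c : ℝ) ≠ 0 := by exact_mod_cast hc.ne'
  rw [mem_smul_set_iff_inv_smul_mem₀ hc', faceP, mem_inter_iff, image_add_right, mem_preimage,
    ← inv_smul_coeZ2_mem_unitSq_iff hc, ← inv_smul_coeZ2_mem_unitSq_iff hc, coeZ2_sub_s7,
    coeZ2_zsmul_s7, smul_sub, inv_smul_smul₀ hc', sub_eq_add_neg]

lemma mem_faceD_iff {n : ℕ} (hn : 1 < n) {D : Set (ℤ × ℤ)} {d α : ℤ × ℤ} :
    d ∈ faceD n D α ↔ d ∈ D ∧ d ∈ Icc (0, 0) ((n : ℤ) - 1, (n : ℤ) - 1) ∧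
      d - ((n : ℤ) - 1) • α ∈ Icc (0, 0) ((n : ℤ) - 1, (n : ℤ) - 1) := by
  rw [← coeZ2_mem_smul_faceP_iff (by omega)]
  push_cast
  rfl

lemma sub_zsmul_mem_Icc_of_abs_le_one {n : ℕ} {d d' α : ℤ × ℤ}
    (hd : d ∈ Icc (0, 0) ((n : ℤ) - 1, (n : ℤ) - 1))
    (hd' : d' ∈ Icc (0, 0) ((n : ℤ) - 1, (n : ℤ) - 1)) (hα : |α.1| ≤ 1 ∧ |α.2| ≤ 1)
    (hγ : |(d' + n • α - d).1| ≤ 1 ∧ |(d' + n • α - d).2| ≤ 1) :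
    d - ((n : ℤ) - 1) • α ∈ Icc (0, 0) ((n : ℤ) - 1, (n : ℤ) - 1) ∧
      d' - ((n : ℤ) - 1) • -α ∈ Icc (0, 0) ((n : ℤ) - 1, (n : ℤ) - 1) ∧
      (α.1 ≠ 0 → (d' + n • α - d).1 = α.1) ∧ (α.2 ≠ 0 → (d' + n • α - d).2 = α.2) := by
  obtain ⟨a, b⟩ := α
  simp only [mem_Icc, Prod.le_def, Prod.fst_sub, Prod.snd_sub, Prod.fst_add, Prod.snd_add,
    Prod.smul_fst, Prod.smul_snd, Prod.fst_neg, Prod.snd_neg, abs_le] at *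
  simp only [nsmul_eq_mul, smul_eq_mul] at *
  obtain rfl | rfl | rfl : a = -1 ∨ a = 0 ∨ a = 1 := by omega
  all_goals obtain rfl | rfl | rfl : b = -1 ∨ b = 0 ∨ b = 1 := by omega
  all_goals omega

lemma eq_or_eq_add_or_eq_sub_of_side {α β γ : ℤ × ℤ}
    (hα : α ∈ ({(1, 0), (-1, 0), (0, 1), (0, -1)} : Set (ℤ × ℤ)))
    (hβ : β ∈ ({(1, 0), (-1, 0), (0, 1), (0, -1)} : Set (ℤ × ℤ)))
    (hperp : α.1 * β.1 + α.2 * β.2 = 0) (hγ : |γ.1| ≤ 1 ∧ |γ.2| ≤ 1)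
    (h₁ : α.1 ≠ 0 → γ.1 = α.1) (h₂ : α.2 ≠ 0 → γ.2 = α.2) :
    γ = α ∨ γ = α + β ∨ γ = α - β := by
  simp only [mem_insert_iff, mem_singleton_iff] at hα hβ
  obtain ⟨a, b⟩ := γ
  rcases hα with rfl | rfl | rfl | rfl <;> rcases hβ with rfl | rfl | rfl | rfl <;>
    simp only [abs_le, Prod.ext_iff, Prod.fst_add, Prod.snd_add, Prod.fst_sub,
      Prod.snd_sub] at * <;>
    omega

lemma mem_Gset_iff {n : ℕ} {D : Set (ℤ × ℤ)} {α δ g : ℤ × ℤ} :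
    g ∈ Gset n D α δ ↔ g ∈ faceD n D α ∧ ∃ e ∈ faceD n D (-α), e + n • α - g = α + δ := by
  refine and_congr_right fun _ => exists_congr fun e => and_congr_right fun _ => ?_
  have : e + n • α - (α + δ) = e + (((n : ℤ) - 1) • α - δ) := by
    rw [sub_smul, one_smul, natCast_zsmul]; abel
  dsimp only
  rw [← this, sub_eq_iff_eq_add, sub_eq_iff_eq_add, add_comm g]

/-- For a side direction `α` and a unit coordinate vector `β ⊥ α`,
the side intersection `F_α = K ∩ (K + α)` satisfies
`F_α = (F_α + G_α)/n ∪ (F_{α+β} + G_{α,β})/n ∪ (F_{α-β} + G_{α,-β})/n`. -/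
theorem fractalSquare_sideIntersection_eq
    (n : ℕ) (D : Set (ℤ × ℤ)) (K : Set (ℝ × ℝ))
    (hK : IsFractalSquare n D K) (α β : ℤ × ℤ)
    (hα : α ∈ ({(1, 0), (-1, 0), (0, 1), (0, -1)} : Set (ℤ × ℤ)))
    (hβ : β ∈ ({(1, 0), (-1, 0), (0, 1), (0, -1)} : Set (ℤ × ℤ)))
    (hperp : α.1 * β.1 + α.2 * β.2 = 0) :
    Fset K α =
      (⋃ g ∈ Gset n D α 0, pieceMap n g '' Fset K α) ∪
      (⋃ g ∈ Gset n D α β, pieceMap n g '' Fset K (α + β)) ∪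
      (⋃ g ∈ Gset n D α (-β), pieceMap n g '' Fset K (α - β)) := by
  have hKP := hK.subset_unitSq
  obtain ⟨hn, hD, -, -, -, -, hfix⟩ := hK
  have hα_abs : |α.1| ≤ 1 ∧ |α.2| ≤ 1 := by
    simp only [mem_insert_iff, mem_singleton_iff] at hα
    rcases hα with rfl | rfl | rfl | rfl <;> simp
  ext x
  conv_lhs => rw [Fset_eq_iUnion_pieceMap (by omega) hfix α]
  simp only [mem_union, mem_iUnion, mem_Gset_iff, exists_prop]
  constructor
  · rintro ⟨d, hd, d', hd', hx⟩
    have hγ := abs_le_one_of_Fset_nonempty hKP (image_nonempty.1 ⟨x, hx⟩)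
    obtain ⟨hdα, hd'α, h₁, h₂⟩ := sub_zsmul_mem_Icc_of_abs_le_one (hD hd) (hD hd') hα_abs hγ
    have hdF : d ∈ faceD n D α := mem_faceD_iff (by omega) |>.2 ⟨hd, hD hd, hdα⟩
    have hd'F : d' ∈ faceD n D (-α) := mem_faceD_iff (by omega) |>.2 ⟨hd', hD hd', hd'α⟩
    rcases eq_or_eq_add_or_eq_sub_of_side hα hβ hperp hγ h₁ h₂ with h | h | h
    · exact .inl <| .inl ⟨d, ⟨hdF, d', hd'F, by rw [h, add_zero]⟩, h ▸ hx⟩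
    · exact .inl <| .inr ⟨d, ⟨hdF, d', hd'F, h⟩, h ▸ hx⟩
    · exact .inr ⟨d, ⟨hdF, d', hd'F, by rw [h, sub_eq_add_neg]⟩, h ▸ hx⟩
  · rintro ((⟨g, ⟨hg, e, he, hγ⟩, hx⟩ | ⟨g, ⟨hg, e, he, hγ⟩, hx⟩) | ⟨g, ⟨hg, e, he, hγ⟩, hx⟩)
    · exact ⟨g, hg.1, e, he.1, by rwa [hγ, add_zero]⟩
    · exact ⟨g, hg.1, e, he.1, by rwa [hγ]⟩
    · exact ⟨g, hg.1, e, he.1, by rwa [hγ, ← sub_eq_add_neg]⟩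
end
end

section
/- Let K₁ and K₂ be fractal segments of order n with digit sets D₁ and D₂ respectively, and let F₀ = K₁ ∩ K₂. Then F₀ = (F₀ + G₀)/n ∪ (F_{−1} + G_{−1})/n ∪ (F₁ + G₁)/n, where for a ∈ {−1,0,1}, F_a = K₁ ∩ (K₂ + a) and G_a = D₁ ∩ (D₂ − a). -/
/-!
A point of `K₁ ∩ K₂` is `(y₁ + d₁)/n = (y₂ + d₂)/n` with `yᵢ ∈ Kᵢ`, `dᵢ ∈ Dᵢ`. Then
`y₁ - y₂ = d₂ - d₁ =: a` is an integer, and as `K₁, K₂ ⊆ [0, 1]` it lies in `{-1, 0, 1}`;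
so `y₁ ∈ F_a` and `d₁ ∈ G_a`. Conversely `(y + a + (d - a))/n = (y + d)/n` puts every
point of `(F_a + G_a)/n` in both `K₁` and `K₂`.
-/

open Set Pointwise

noncomputable section

/-- `K` is a fractal segment of order `n` with (nonempty) digit set `D ⊆ {0,…,n-1}`:
a nonempty compact set with `K = (K + D)/n`. -/
def IsFractalSegment (n : ℕ) (D : Set ℤ) (K : Set ℝ) : Prop :=
  2 ≤ n ∧ D.Nonempty ∧ D ⊆ Set.Icc 0 ((n : ℤ) - 1) ∧
  K.Nonempty ∧ IsCompact K ∧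
  K = ⋃ d ∈ D, (fun x => (x + (d : ℝ)) / n) '' K

/-- `F_a = K₁ ∩ (K₂ + a)`. -/
def segF (K₁ K₂ : Set ℝ) (a : ℤ) : Set ℝ := K₁ ∩ ((· + (a : ℝ)) '' K₂)

/-- `G_a = D₁ ∩ (D₂ - a)`. -/
def segG (D₁ D₂ : Set ℤ) (a : ℤ) : Set ℤ := D₁ ∩ ((· - a) '' D₂)

namespace IsFractalSegment

variable {n : ℕ} {D : Set ℤ} {K : Set ℝ}

lemma digit_map_mem (h : IsFractalSegment n D K) {d : ℤ} (hd : d ∈ D) {y : ℝ} (hy : y ∈ K) :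
    (y + d) / n ∈ K := by
  rw [h.2.2.2.2.2]
  exact mem_biUnion hd (mem_image_of_mem _ hy)

lemma exists_digit_map_eq (h : IsFractalSegment n D K) {x : ℝ} (hx : x ∈ K) :
    ∃ d ∈ D, ∃ y ∈ K, (y + d) / n = x := by
  rw [h.2.2.2.2.2] at hx
  simpa only [mem_iUnion, mem_image, exists_prop] using hx

lemma subset_Icc (h : IsFractalSegment n D K) : K ⊆ Icc 0 1 := by
  obtain ⟨hn, -, hDsub, hKne, hKc, -⟩ := id h
  have hn2 : (2 : ℝ) ≤ n := by exact_mod_cast hn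
  have hbdd := hKc.isBounded
  -- The extreme points of `K` are themselves images `(y + d)/n` of points of `K`.
  obtain ⟨d₁, hd₁, y₁, hy₁, hsup⟩ := h.exists_digit_map_eq (hKc.sSup_mem hKne)
  obtain ⟨d₀, hd₀, y₀, hy₀, hinf⟩ := h.exists_digit_map_eq (hKc.sInf_mem hKne)
  rw [div_eq_iff (by positivity)] at hsup hinf
  have hd₁_le : (d₁ : ℝ) ≤ n - 1 := by exact_mod_cast (hDsub hd₁).2
  have hd₀_ge : (0 : ℝ) ≤ d₀ := by exact_mod_cast (hDsub hd₀).1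
  have hsup_le : sSup K ≤ 1 := by nlinarith [le_csSup hbdd.bddAbove hy₁]
  have hinf_ge : 0 ≤ sInf K := by nlinarith [csInf_le hbdd.bddBelow hy₀]
  exact fun x hx => ⟨hinf_ge.trans (csInf_le hbdd.bddBelow hx),
    (le_csSup hbdd.bddAbove hx).trans hsup_le⟩

end IsFractalSegment

lemma int_mem_Icc_of_add_mem_Icc {y : ℝ} {a : ℤ} (hy : y ∈ Icc (0 : ℝ) 1)
    (hya : y + a ∈ Icc (0 : ℝ) 1) : a ∈ Icc (-1) 1 := by
  have h₁ : (-1 : ℝ) ≤ a := by linarith [hy.2, hya.1]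
  have h₂ : (a : ℝ) ≤ 1 := by linarith [hy.1, hya.2]
  exact ⟨by exact_mod_cast h₁, by exact_mod_cast h₂⟩

/-- The piece `(F_a + G_a)/n`. -/
def segPiece (n : ℕ) (D₁ D₂ : Set ℤ) (K₁ K₂ : Set ℝ) (a : ℤ) : Set ℝ :=
  ⋃ g ∈ segG D₁ D₂ a, (fun x => (x + (g : ℝ)) / n) '' segF K₁ K₂ a

section

variable {n : ℕ} {D₁ D₂ : Set ℤ} {K₁ K₂ : Set ℝ}

lemma mem_segF_zero {x : ℝ} : x ∈ segF K₁ K₂ 0 ↔ x ∈ K₁ ∧ x ∈ K₂ := by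
  simp [segF]

lemma mem_segPiece_iff {a : ℤ} {x : ℝ} :
    x ∈ segPiece n D₁ D₂ K₁ K₂ a ↔
      ∃ d ∈ D₂, ∃ y ∈ K₂, d - a ∈ D₁ ∧ y + a ∈ K₁ ∧ (y + d) / n = x := by
  simp only [segPiece, segF, segG, mem_iUnion, mem_inter_iff, mem_image, exists_prop]
  constructor
  · rintro ⟨_, ⟨hg, d, hd, rfl⟩, _, ⟨hy₁, y, hy, rfl⟩, rfl⟩
    exact ⟨d, hd, y, hy, hg, hy₁, by push_cast; ring⟩
  · rintro ⟨d, hd, y, hy, hg, hy₁, rfl⟩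
    exact ⟨d - a, ⟨hg, d, hd, rfl⟩, y + a, ⟨hy₁, y, hy, rfl⟩, by push_cast; ring⟩

lemma segPiece_subset_segF_zero (h1 : IsFractalSegment n D₁ K₁)
    (h2 : IsFractalSegment n D₂ K₂) (a : ℤ) :
    segPiece n D₁ D₂ K₁ K₂ a ⊆ segF K₁ K₂ 0 := by
  intro x hx
  obtain ⟨d, hd, y, hy, hda, hya, rfl⟩ := mem_segPiece_iff.1 hx
  refine mem_segF_zero.2 ⟨?_, h2.digit_map_mem hd hy⟩
  have hK₁ := h1.digit_map_mem hda hya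
  push_cast at hK₁
  rwa [add_add_sub_cancel] at hK₁

lemma exists_mem_segPiece_of_mem_segF_zero (h1 : IsFractalSegment n D₁ K₁)
    (h2 : IsFractalSegment n D₂ K₂) {x : ℝ} (hx : x ∈ segF K₁ K₂ 0) :
    ∃ a ∈ Icc (-1 : ℤ) 1, x ∈ segPiece n D₁ D₂ K₁ K₂ a := by
  obtain ⟨hx₁, hx₂⟩ := mem_segF_zero.1 hx
  obtain ⟨d₁, hd₁, y₁, hy₁, rfl⟩ := h1.exists_digit_map_eq hx₁
  obtain ⟨d₂, hd₂, y₂, hy₂, hx⟩ := h2.exists_digit_map_eq hx₂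
  have hn0 : (n : ℝ) ≠ 0 := Nat.cast_ne_zero.2 (by have := h1.1; omega)
  have hy : y₂ + ((d₂ - d₁ : ℤ) : ℝ) = y₁ := by
    rw [div_left_inj' hn0] at hx
    push_cast
    linarith
  refine ⟨d₂ - d₁, int_mem_Icc_of_add_mem_Icc (h2.subset_Icc hy₂) (hy ▸ h1.subset_Icc hy₁), ?_⟩
  exact mem_segPiece_iff.2 ⟨d₂, hd₂, y₂, hy₂, by rwa [sub_sub_cancel], hy ▸ hy₁, hx⟩

end

/-- For fractal segments `K₁, K₂`, the intersection `F₀ = K₁ ∩ K₂`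
satisfies `F₀ = (F₀ + G₀)/n ∪ (F₋₁ + G₋₁)/n ∪ (F₁ + G₁)/n`. -/
theorem fractalSegment_intersection_eq
    (n : ℕ) (D₁ D₂ : Set ℤ) (K₁ K₂ : Set ℝ)
    (h1 : IsFractalSegment n D₁ K₁) (h2 : IsFractalSegment n D₂ K₂) :
    segF K₁ K₂ 0 =
      (⋃ g ∈ segG D₁ D₂ 0, (fun x => (x + (g : ℝ)) / n) '' segF K₁ K₂ 0) ∪
      (⋃ g ∈ segG D₁ D₂ (-1), (fun x => (x + (g : ℝ)) / n) '' segF K₁ K₂ (-1)) ∪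
      (⋃ g ∈ segG D₁ D₂ 1, (fun x => (x + (g : ℝ)) / n) '' segF K₁ K₂ 1) := by
  change _ = segPiece n D₁ D₂ K₁ K₂ 0 ∪ segPiece n D₁ D₂ K₁ K₂ (-1) ∪ segPiece n D₁ D₂ K₁ K₂ 1
  refine Subset.antisymm (fun x hx => ?_) ?_
  · obtain ⟨a, ⟨ha₁, ha₂⟩, hxa⟩ := exists_mem_segPiece_of_mem_segF_zero h1 h2 hx
    interval_cases a <;> simp [hxa]
  · have piece_sub := segPiece_subset_segF_zero h1 h2
    exact union_subset (union_subset (piece_sub 0) (piece_sub (-1))) (piece_sub 1)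
end
end

section
/- Let K₁ and K₂ be fractal segments of order n with digit sets D₁ and D₂. For a ∈ {−1,0,1} set F_a = K₁ ∩ (K₂ + a) and G_a = D₁ ∩ (D₂ − a). If G₀ = D₁ ∩ D₂ = ∅, then F₀ = K₁ ∩ K₂ equals (F₁ + G₁)/n ∪ (F_{−1} + G_{−1})/n; in particular F₀ is finite, of cardinality |F₁|·|G₁| + |F_{−1}|·|G_{−1}|. -/
open Set Pointwise

noncomputable section

/-! The intersection `K₁ ∩ K₂` of two fractal segments is cut out by their first-level pieces
`(K₁ + d₁)/n` and `(K₂ + d₂)/n`. Since both segments lie in `[0, 1]`, two such pieces can only meet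
when `|d₂ - d₁| ≤ 1`; the case `d₁ = d₂` is excluded by `G₀ = ∅`, and for `d₂ - d₁ = ±1` the
common points come from `F_{±1}`, which is contained in the single point `{1}` resp. `{0}`.
Hence `K₁ ∩ K₂` is the disjoint union of `(F₁ + G₁)/n` and `(F₋₁ + G₋₁)/n`, and each of these
is in bijection with the product `F_a × G_a`. -/

def digitImage (n : ℕ) (G : Set ℤ) (s : Set ℝ) : Set ℝ :=
  ⋃ g ∈ G, (fun x => (x + (g : ℝ)) / n) '' s

@[simp]
lemma mem_digitImage {n : ℕ} {G : Set ℤ} {s : Set ℝ} {x : ℝ} :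
    x ∈ digitImage n G s ↔ ∃ g ∈ G, ∃ y ∈ s, (y + g) / n = x := by
  simp [digitImage]

@[simp]
lemma mem_segF {K₁ K₂ : Set ℝ} {a : ℤ} {y : ℝ} : y ∈ segF K₁ K₂ a ↔ y ∈ K₁ ∧ y - a ∈ K₂ := by
  simp [segF, sub_eq_add_neg]

@[simp]
lemma mem_segG {D₁ D₂ : Set ℤ} {a g : ℤ} : g ∈ segG D₁ D₂ a ↔ g ∈ D₁ ∧ g + a ∈ D₂ := by
  simp [segG, sub_eq_iff_eq_add]

lemma segG_zero (D₁ D₂ : Set ℤ) : segG D₁ D₂ 0 = D₁ ∩ D₂ := by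
  ext; simp

lemma digitImage_eq_image_prod (n : ℕ) (G : Set ℤ) (s : Set ℝ) :
    digitImage n G s = (fun p : ℝ × ℤ => (p.1 + p.2) / n) '' (s ×ˢ G) := by
  ext x
  simp only [mem_digitImage, mem_image, mem_prod, Prod.exists]
  grind

lemma injOn_add_div_prod {n : ℕ} (hn : n ≠ 0) {s : Set ℝ} (hs : s.Subsingleton) (G : Set ℤ) :
    InjOn (fun p : ℝ × ℤ => (p.1 + p.2) / n) (s ×ˢ G) := by
  rintro ⟨y, g⟩ ⟨hy, -⟩ ⟨y', g'⟩ ⟨hy', -⟩ h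
  obtain rfl : y = y' := hs hy hy'
  have : (g : ℝ) = g' := by
    simpa [div_left_inj' (Nat.cast_ne_zero.mpr hn : (n : ℝ) ≠ 0)] using h
  simp only [Prod.mk.injEq, true_and]
  exact_mod_cast this

lemma Set.Subsingleton.finite_digitImage {s : Set ℝ} (hs : s.Subsingleton) (n : ℕ) {G : Set ℤ}
    (hG : G.Finite) : (digitImage n G s).Finite := by
  rw [digitImage_eq_image_prod]
  exact (hs.finite.prod hG).image _

lemma Set.Subsingleton.ncard_digitImage {n : ℕ} (hn : n ≠ 0) {s : Set ℝ} (hs : s.Subsingleton)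
    (G : Set ℤ) : (digitImage n G s).ncard = s.ncard * G.ncard := by
  rw [digitImage_eq_image_prod, (injOn_add_div_prod hn hs G).ncard_image, ncard_prod]

lemma segF_subset {K₁ K₂ : Set ℝ} (h₁ : K₁ ⊆ Icc 0 1) (h₂ : K₂ ⊆ Icc 0 1) (a : ℤ) :
    segF K₁ K₂ a ⊆ Icc 0 1 ∩ Icc (a : ℝ) (a + 1) := by
  intro y hy
  rw [mem_segF] at hy
  obtain ⟨hy₀, hy₁⟩ := h₁ hy.1
  obtain ⟨hz₀, hz₁⟩ := h₂ hy.2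
  exact ⟨⟨hy₀, hy₁⟩, by linarith, by linarith⟩

lemma segF_one_subset {K₁ K₂ : Set ℝ} (h₁ : K₁ ⊆ Icc 0 1) (h₂ : K₂ ⊆ Icc 0 1) :
    segF K₁ K₂ 1 ⊆ {1} := fun y hy => by
  obtain ⟨⟨-, hy₁⟩, hy₁', -⟩ := segF_subset h₁ h₂ 1 hy
  push_cast at hy₁'
  exact le_antisymm hy₁ hy₁'

lemma segF_neg_one_subset {K₁ K₂ : Set ℝ} (h₁ : K₁ ⊆ Icc 0 1) (h₂ : K₂ ⊆ Icc 0 1) :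
    segF K₁ K₂ (-1) ⊆ {0} := fun y hy => by
  obtain ⟨⟨hy₀, -⟩, -, hy₀'⟩ := segF_subset h₁ h₂ (-1) hy
  push_cast at hy₀'
  exact le_antisymm (by linarith) hy₀

lemma digitImage_segF_subset_inter {n : ℕ} {D₁ D₂ : Set ℤ} {K₁ K₂ : Set ℝ}
    (hK₁ : K₁ = digitImage n D₁ K₁) (hK₂ : K₂ = digitImage n D₂ K₂) (a : ℤ) :
    digitImage n (segG D₁ D₂ a) (segF K₁ K₂ a) ⊆ K₁ ∩ K₂ := by
  intro x hx
  obtain ⟨g, hg, y, hy, rfl⟩ := mem_digitImage.mp hx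
  rw [mem_segG] at hg
  rw [mem_segF] at hy
  constructor
  · rw [hK₁]; exact mem_digitImage.mpr ⟨g, hg.1, y, hy.1, rfl⟩
  · rw [hK₂]
    refine mem_digitImage.mpr ⟨g + a, hg.2, y - a, hy.2, ?_⟩
    push_cast; ring_nf

lemma inter_subset_iUnion_digitImage_segF {n : ℕ} (hn : n ≠ 0) {D₁ D₂ : Set ℤ} {K₁ K₂ : Set ℝ}
    (hK₁ : K₁ = digitImage n D₁ K₁) (hK₂ : K₂ = digitImage n D₂ K₂) :
    K₁ ∩ K₂ ⊆ ⋃ a : ℤ, digitImage n (segG D₁ D₂ a) (segF K₁ K₂ a) := by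
  rintro x ⟨hx₁, hx₂⟩
  rw [hK₁, mem_digitImage] at hx₁
  obtain ⟨d₁, hd₁, y, hy, rfl⟩ := hx₁
  rw [hK₂, mem_digitImage] at hx₂
  obtain ⟨d₂, hd₂, z, hz, hyz⟩ := hx₂
  have hz' : y - (d₂ - d₁ : ℤ) = z := by
    field_simp at hyz
    push_cast
    linarith
  refine mem_iUnion.mpr ⟨d₂ - d₁, mem_digitImage.mpr ⟨d₁, ?_, y, ?_, rfl⟩⟩
  · exact mem_segG.mpr ⟨hd₁, by simpa using hd₂⟩
  · exact mem_segF.mpr ⟨hy, hz' ▸ hz⟩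

lemma inter_eq_digitImage_segF_union {n : ℕ} (hn : n ≠ 0) {D₁ D₂ : Set ℤ} {K₁ K₂ : Set ℝ}
    (hK₁ : K₁ = digitImage n D₁ K₁) (hK₂ : K₂ = digitImage n D₂ K₂)
    (h₁ : K₁ ⊆ Icc 0 1) (h₂ : K₂ ⊆ Icc 0 1) (hG₀ : D₁ ∩ D₂ = ∅) :
    K₁ ∩ K₂ = digitImage n (segG D₁ D₂ 1) (segF K₁ K₂ 1) ∪
      digitImage n (segG D₁ D₂ (-1)) (segF K₁ K₂ (-1)) := by
  refine Subset.antisymm (fun x hx => ?_)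
    (union_subset (digitImage_segF_subset_inter hK₁ hK₂ 1) (digitImage_segF_subset_inter hK₁ hK₂ (-1)))
  obtain ⟨a, ha⟩ := mem_iUnion.mp (inter_subset_iUnion_digitImage_segF hn hK₁ hK₂ hx)
  obtain ⟨g, hg, y, hy, -⟩ := mem_digitImage.mp ha
  obtain ⟨⟨hy₀, hy₁⟩, hay, hya⟩ := segF_subset h₁ h₂ a hy
  have ha_le : a ≤ 1 := by exact_mod_cast (by linarith : (a : ℝ) ≤ 1)
  have ha_ge : -1 ≤ a := by exact_mod_cast (by linarith : (-1 : ℝ) ≤ a)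
  obtain rfl | rfl | rfl : a = 1 ∨ a = 0 ∨ a = -1 := by omega
  · exact Or.inl ha
  · rw [segG_zero, hG₀] at hg
    exact absurd hg (notMem_empty g)
  · exact Or.inr ha

lemma disjoint_digitImage_segF {n : ℕ} (hn : n ≠ 0) {D₁ D₂ : Set ℤ} {K₁ K₂ : Set ℝ}
    (h₁ : K₁ ⊆ Icc 0 1) (h₂ : K₂ ⊆ Icc 0 1) (hG₀ : D₁ ∩ D₂ = ∅) :
    Disjoint (digitImage n (segG D₁ D₂ 1) (segF K₁ K₂ 1))
      (digitImage n (segG D₁ D₂ (-1)) (segF K₁ K₂ (-1))) := by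
  refine disjoint_left.mpr fun x hx hx' => ?_
  obtain ⟨g, hg, y, hy, rfl⟩ := mem_digitImage.mp hx
  obtain ⟨g', hg', y', hy', hgg'⟩ := mem_digitImage.mp hx'
  obtain rfl : y = 1 := segF_one_subset h₁ h₂ hy
  obtain rfl : y' = 0 := segF_neg_one_subset h₁ h₂ hy'
  obtain rfl : g' = g + 1 := by
    field_simp at hgg'
    exact_mod_cast (by linarith : (g' : ℝ) = g + 1)
  rw [mem_segG] at hg hg'
  exact eq_empty_iff_forall_notMem.mp hG₀ (g + 1) ⟨hg'.1, hg.2⟩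

namespace IsFractalSegment

variable {n : ℕ} {D : Set ℤ} {K : Set ℝ}

lemma eq_digitImage (h : IsFractalSegment n D K) : K = digitImage n D K := h.2.2.2.2.2

lemma digits_finite (h : IsFractalSegment n D K) : D.Finite := (finite_Icc _ _).subset h.2.2.1

end IsFractalSegment

/-- If `G₀ = D₁ ∩ D₂ = ∅`, then
`F₀ = (F₁ + G₁)/n ∪ (F₋₁ + G₋₁)/n`; in particular `F₀` is finite, of cardinality
`|F₁|·|G₁| + |F₋₁|·|G₋₁|`. -/
theorem fractalSegment_intersection_of_empty_G0
    (n : ℕ) (D₁ D₂ : Set ℤ) (K₁ K₂ : Set ℝ)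
    (h1 : IsFractalSegment n D₁ K₁) (h2 : IsFractalSegment n D₂ K₂)
    (hG0 : D₁ ∩ D₂ = ∅) :
    K₁ ∩ K₂ =
      (⋃ g ∈ segG D₁ D₂ 1, (fun x => (x + (g : ℝ)) / n) '' segF K₁ K₂ 1) ∪
      (⋃ g ∈ segG D₁ D₂ (-1), (fun x => (x + (g : ℝ)) / n) '' segF K₁ K₂ (-1)) ∧
    (K₁ ∩ K₂).Finite ∧
    Nat.card (K₁ ∩ K₂ : Set ℝ) =
      Nat.card (segF K₁ K₂ 1) * Nat.card (segG D₁ D₂ 1) +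
      Nat.card (segF K₁ K₂ (-1)) * Nat.card (segG D₁ D₂ (-1)) := by
  have hn : n ≠ 0 := by have := h1.1; omega
  have hF_one := (subsingleton_singleton.anti (segF_one_subset h1.subset_Icc h2.subset_Icc))
  have hF_neg_one := (subsingleton_singleton.anti (segF_neg_one_subset h1.subset_Icc h2.subset_Icc))
  have hG : ∀ a, (segG D₁ D₂ a).Finite := fun a => h1.digits_finite.subset inter_subset_left
  have hA := hF_one.finite_digitImage n (hG 1)
  have hB := hF_neg_one.finite_digitImage n (hG (-1))
  have hinter := inter_eq_digitImage_segF_union hn h1.eq_digitImage h2.eq_digitImage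
    h1.subset_Icc h2.subset_Icc hG0
  refine ⟨hinter, hinter ▸ hA.union hB, ?_⟩
  simp only [Nat.card_coe_set_eq]
  rw [hinter, ncard_union_eq (disjoint_digitImage_segF hn h1.subset_Icc h2.subset_Icc hG0) hA hB,
    hF_one.ncard_digitImage hn, hF_neg_one.ncard_digitImage hn]
end
end

section
/- Let K be a fractal square of order n with digit set D which is a dendrite, and suppose that A_D = {α, −α, β, −β} where α ∈ {(1,1),(1,−1)} and β ∈ {(1,0),(0,1)}, with A_D = {γ ∈ {−1,0,1}² \ {(0,0)} : D ∩ (D + γ) ≠ ∅}. Then for every k ≥ 1 there is no d ∈ ℤ² such that all four points d, d − α, d − β, d − α − β belong to D^k. -/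
/- A pair of points of `D^k` differing by a unit axis vector `γ` either comes from a pair of
digits differing by `γ` (so `γ ∈ A_D`), or, after a carry, from a pair of points of `D^(k-1)`
differing by `γ`. Every quadruple `{d, d-α, d-β, d-α-β}` contains a pair differing by the unit
axis vector orthogonal to `β`, which is not in `A_D = {±α, ±β}`. -/

open Set Pointwise

noncomputable section

def unitAxisVectors : Set (ℤ × ℤ) := {(1, 0), (-1, 0), (0, 1), (0, -1)}

theorem unitAxisVectors_subset :
    unitAxisVectors ⊆ ({-1, 0, 1} ×ˢ {-1, 0, 1} : Set (ℤ × ℤ)) \ {(0, 0)} := by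
  rintro γ (rfl | rfl | rfl | rfl) <;> simp

theorem Int.digit_add_carry_of_mul_add_eq {n a a' b b' c : ℤ} (hb : b ∈ Ico 0 n)
    (hb' : b' ∈ Ico 0 n) (hc : |c| ≤ 1) (h : n * a' + b' = n * a + b + c) :
    a' = a ∧ b' = b + c ∨ a' = a + c ∧ b' = b + c - n * c := by
  rw [mem_Ico] at hb hb'
  rw [abs_le] at hc
  have hcarry : n * (a' - a) = b + c - b' := by linear_combination h
  have hlo : -1 ≤ a' - a := by nlinarith
  have hhi : a' - a ≤ 1 := by nlinarith
  obtain hδ | hδ | hδ : a' - a = -1 ∨ a' - a = 0 ∨ a' - a = 1 := by omega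
  all_goals rw [hδ] at hcarry
  · obtain rfl : c = -1 := by omega
    omega
  · omega
  · obtain rfl : c = 1 := by omega
    omega

theorem eq_add_or_eq_add_of_smul_add_eq {n : ℤ} {a a' b b' γ : ℤ × ℤ}
    (hb : b ∈ Icc (0, 0) (n - 1, n - 1)) (hb' : b' ∈ Icc (0, 0) (n - 1, n - 1))
    (hγ : γ ∈ unitAxisVectors)
    (h : n • a' + b' = n • a + b + γ) :
    b' = b + γ ∨ a' = a + γ := by
  simp only [mem_Icc, Prod.le_def] at hb hb'
  simp only [unitAxisVectors, mem_insert_iff, mem_singleton_iff] at hγ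
  have hγ₁ : |γ.1| ≤ 1 := by rcases hγ with rfl | rfl | rfl | rfl <;> simp
  have hγ₂ : |γ.2| ≤ 1 := by rcases hγ with rfl | rfl | rfl | rfl <;> simp
  have h₁ := Int.digit_add_carry_of_mul_add_eq (n := n) (b := b.1) (b' := b'.1)
    ⟨hb.1.1, by omega⟩ ⟨hb'.1.1, by omega⟩ hγ₁ (by simpa using congrArg Prod.fst h)
  have h₂ := Int.digit_add_carry_of_mul_add_eq (n := n) (b := b.2) (b' := b'.2)
    ⟨hb.1.2, by omega⟩ ⟨hb'.1.2, by omega⟩ hγ₂ (by simpa using congrArg Prod.snd h)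
  clear h
  rcases hγ with rfl | rfl | rfl | rfl <;> simp only [Prod.ext_iff, Prod.fst_add, Prod.snd_add] <;>
    omega

theorem add_notMem_Dpow_of_notMem_adjDirs {n : ℕ} {D : Set (ℤ × ℤ)} {γ : ℤ × ℤ}
    (hD : D ⊆ Icc (0, 0) ((n : ℤ) - 1, (n : ℤ) - 1))
    (hγ : γ ∈ unitAxisVectors) (hA : γ ∉ adjDirs D) :
    ∀ {k : ℕ} {x : ℤ × ℤ}, x ∈ Dpow n D k → x + γ ∉ Dpow n D k := by
  intro k
  induction k with
  | zero =>
    rintro x rfl h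
    exact (unitAxisVectors_subset hγ).2 (by simpa [Dpow, Prod.zero_eq_mk] using h)
  | succ k ih =>
    rintro - ⟨a, ha, b, hb, rfl⟩ ⟨a', ha', b', hb', h⟩
    rcases eq_add_or_eq_add_of_smul_add_eq (hD hb) (hD hb') hγ h with hdigit | rfl
    · obtain ⟨hbox, hne⟩ := unitAxisVectors_subset hγ
      exact hA ⟨hbox, hne, b', hb', b, hb, hdigit.symm⟩
    · exact ih ha ha'

theorem fractalSquare_dendrite_no_quadruple_caseC_general
    (n : ℕ) (D : Set (ℤ × ℤ)) (K : Set (ℝ × ℝ))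
    (hK : IsFractalSquare n D K)
    (α β : ℤ × ℤ)
    (hα : α ∈ ({(1, 1), (1, -1)} : Set (ℤ × ℤ)))
    (hβ : β ∈ ({(1, 0), (0, 1)} : Set (ℤ × ℤ)))
    (hAD : adjDirs D = {α, -α, β, -β}) :
    ∀ k ≥ 1, ¬ ∃ d : ℤ × ℤ, d ∈ Dpow n D k ∧ d - α ∈ Dpow n D k ∧
      d - β ∈ Dpow n D k ∧ d - α - β ∈ Dpow n D k := by
  obtain ⟨-, hD, -⟩ := hK
  rintro k - ⟨d, h₀, hα₁, hβ₁, hαβ₁⟩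
  simp only [mem_insert_iff, mem_singleton_iff] at hα hβ
  rcases hα with rfl | rfl <;> rcases hβ with rfl | rfl
  · exact add_notMem_Dpow_of_notMem_adjDirs (γ := (0, 1)) hD (by simp [unitAxisVectors])
      (by simp [hAD]) hα₁ (by convert hβ₁ using 1; ext <;> simp)
  · exact add_notMem_Dpow_of_notMem_adjDirs (γ := (1, 0)) hD (by simp [unitAxisVectors])
      (by simp [hAD]) hα₁ (by convert hβ₁ using 1; ext <;> simp)
  · exact add_notMem_Dpow_of_notMem_adjDirs (γ := (0, -1)) hD (by simp [unitAxisVectors])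
      (by simp [hAD]) hα₁ (by convert hβ₁ using 1; ext <;> simp)
  · exact add_notMem_Dpow_of_notMem_adjDirs (γ := (1, 0)) hD (by simp [unitAxisVectors])
      (by simp [hAD]) hαβ₁ (by convert h₀ using 1; ext <;> simp)

/-- (Case **C**.) Let `K` be a fractal square dendrite with
`A_D = {α, -α, β, -β}`, where `α ∈ {(1,1),(1,-1)}` and `β ∈ {(1,0),(0,1)}`. Then for
every `k ≥ 1` the digit set `D^k` contains no quadruple `{d, d-α, d-β, d-α-β}`. -/
theorem fractalSquare_dendrite_no_quadruple_caseC
    (n : ℕ) (D : Set (ℤ × ℤ)) (K : Set (ℝ × ℝ))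
    (hK : IsFractalSquare n D K) (hden : IsDendrite K)
    (α β : ℤ × ℤ)
    (hα : α ∈ ({(1, 1), (1, -1)} : Set (ℤ × ℤ)))
    (hβ : β ∈ ({(1, 0), (0, 1)} : Set (ℤ × ℤ)))
    (hAD : adjDirs D = {α, -α, β, -β}) :
    ∀ k ≥ 1, ¬ ∃ d : ℤ × ℤ, d ∈ Dpow n D k ∧ d - α ∈ Dpow n D k ∧
      d - β ∈ Dpow n D k ∧ d - α - β ∈ Dpow n D k :=
  fractalSquare_dendrite_no_quadruple_caseC_general n D K hK α β hα hβ hAD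
end
end
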